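/- arXiv:2301.08694 — 3 statements merged into one kernel-verified Lean document; each statement's English description precedes it below -/
import Mathlib

section
/- Let {𝔄_n} be sub-σ-algebras of 𝔄. If A and B are both uniformly covered by {𝔄_n}, then A ∪ B is uniformly covered by {𝔄_n}. -/
open MeasureTheory Filter Set Topology
open scoped ENNReal symmDiff

noncomputable section

def indR {X : Type*} (A : Set X) : X → ℝ := A.indicator fun _ => (1 : ℝ)

def UnifCovers {X : Type*} [mX : MeasurableSpace X] (μ : Measure X)
    (𝔄 : ℕ → MeasurableSpace X) (A : Set X) (As : ℕ → Set X) : Prop :=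
  (∀ n, MeasurableSet[𝔄 n] (As n)) ∧
  (∀ᵐ x ∂μ, Tendsto (fun n => indR (As n) x) atTop (𝓝 (indR A x))) ∧
  Tendsto (fun n => eLpNorm (μ[indR (A \ As n) | 𝔄 n]) ⊤ μ) atTop (𝓝 0)

def UnifCovered {X : Type*} [mX : MeasurableSpace X] (μ : Measure X)
    (𝔄 : ℕ → MeasurableSpace X) (A : Set X) : Prop :=
  ∃ As, UnifCovers μ 𝔄 A As

lemma indR_union {X : Type*} (S T : Set X) (x : X) :
    indR (S ∪ T) x = max (indR S x) (indR T x) := by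
  by_cases hS : x ∈ S <;> by_cases hT : x ∈ T <;>
    simp [indR, Set.indicator, hS, hT]

lemma indR_nonneg {X : Type*} (S : Set X) (x : X) : 0 ≤ indR S x := by
  by_cases hS : x ∈ S <;> simp [indR, Set.indicator, hS]

lemma indR_diff_union_le {X : Type*} (A B S T : Set X) (x : X) :
    indR ((A ∪ B) \ (S ∪ T)) x ≤ indR (A \ S) x + indR (B \ T) x := by
  by_cases h : x ∈ (A ∪ B) \ (S ∪ T)
  · have hx : x ∈ A \ S ∨ x ∈ B \ T := by
      rcases h with ⟨hAB, hST⟩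
      rcases hAB with h1 | h1
      · exact Or.inl ⟨h1, fun hs => hST (Or.inl hs)⟩
      · exact Or.inr ⟨h1, fun hs => hST (Or.inr hs)⟩
    rcases hx with hx | hx
    · have := indR_nonneg (B \ T) x
      simp [indR, Set.indicator, h, hx]
      by_cases h2 : x ∈ B \ T <;> simp [h2]
    · have := indR_nonneg (A \ S) x
      simp [indR, Set.indicator, h, hx]
      by_cases h2 : x ∈ A \ S <;> simp [h2]
  · have h1 := indR_nonneg (A \ S) x
    have h2 := indR_nonneg (B \ T) x
    simp only [indR, Set.indicator, if_neg h]
    positivity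

lemma indR_integrable {X : Type*} [mX : MeasurableSpace X] (μ : Measure X)
    [IsProbabilityMeasure μ] {S : Set X} (hS : MeasurableSet S) :
    Integrable (indR S) μ := by
  exact (integrable_const (1 : ℝ)).indicator hS

theorem stmt7 {X : Type*} [mX : MeasurableSpace X] (μ : Measure X) [IsProbabilityMeasure μ]
    (𝔄 : ℕ → MeasurableSpace X) (h𝔄 : ∀ n, 𝔄 n ≤ mX)
    (A B : Set X) (hA : MeasurableSet A) (hB : MeasurableSet B)
    (hcA : UnifCovered μ 𝔄 A) (hcB : UnifCovered μ 𝔄 B) :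
    UnifCovered μ 𝔄 (A ∪ B) := by
  obtain ⟨As, hAsM, hAsT, hAsN⟩ := hcA
  obtain ⟨Bs, hBsM, hBsT, hBsN⟩ := hcB
  refine ⟨fun n => As n ∪ Bs n, fun n => (hAsM n).union (hBsM n), ?_, ?_⟩
  · filter_upwards [hAsT, hBsT] with x hxA hxB
    simpa only [indR_union] using hxA.max hxB
  · have key : ∀ n, eLpNorm (μ[indR ((A ∪ B) \ (As n ∪ Bs n)) | 𝔄 n]) ⊤ μ ≤
        eLpNorm (μ[indR (A \ As n) | 𝔄 n]) ⊤ μ + eLpNorm (μ[indR (B \ Bs n) | 𝔄 n]) ⊤ μ := by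
      intro n
      have hAsX : MeasurableSet (As n) := h𝔄 n _ (hAsM n)
      have hBsX : MeasurableSet (Bs n) := h𝔄 n _ (hBsM n)
      have hintC : Integrable (indR ((A ∪ B) \ (As n ∪ Bs n))) μ :=
        indR_integrable μ ((hA.union hB).diff (hAsX.union hBsX))
      have hintA : Integrable (indR (A \ As n)) μ := indR_integrable μ (hA.diff hAsX)
      have hintB : Integrable (indR (B \ Bs n)) μ := indR_integrable μ (hB.diff hBsX)
      have hmono : μ[indR ((A ∪ B) \ (As n ∪ Bs n)) | 𝔄 n] ≤ᵐ[μ]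
          μ[indR (A \ As n) + indR (B \ Bs n) | 𝔄 n] :=
        condExp_mono hintC (hintA.add hintB)
          (Filter.Eventually.of_forall fun x => indR_diff_union_le A B (As n) (Bs n) x)
      have hadd : μ[indR (A \ As n) + indR (B \ Bs n) | 𝔄 n] =ᵐ[μ]
          μ[indR (A \ As n) | 𝔄 n] + μ[indR (B \ Bs n) | 𝔄 n] :=
        condExp_add hintA hintB _
      have hCpos : 0 ≤ᵐ[μ] μ[indR ((A ∪ B) \ (As n ∪ Bs n)) | 𝔄 n] :=
        condExp_nonneg (Filter.Eventually.of_forall fun x => indR_nonneg _ x)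
      have hApos : 0 ≤ᵐ[μ] μ[indR (A \ As n) | 𝔄 n] :=
        condExp_nonneg (Filter.Eventually.of_forall fun x => indR_nonneg _ x)
      have hBpos : 0 ≤ᵐ[μ] μ[indR (B \ Bs n) | 𝔄 n] :=
        condExp_nonneg (Filter.Eventually.of_forall fun x => indR_nonneg _ x)
      calc eLpNorm (μ[indR ((A ∪ B) \ (As n ∪ Bs n)) | 𝔄 n]) ⊤ μ
          ≤ eLpNorm (μ[indR (A \ As n) | 𝔄 n] + μ[indR (B \ Bs n) | 𝔄 n]) ⊤ μ := by
            refine eLpNorm_mono_ae ?_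
            filter_upwards [hmono, hadd, hCpos, hApos, hBpos] with x h1 h2 h3 h4 h5
            rw [Real.norm_eq_abs, Real.norm_eq_abs, abs_of_nonneg h3]
            exact (h1.trans h2.le).trans (le_abs_self _)
        _ ≤ eLpNorm (μ[indR (A \ As n) | 𝔄 n]) ⊤ μ + eLpNorm (μ[indR (B \ Bs n) | 𝔄 n]) ⊤ μ :=
            eLpNorm_add_le
              ((stronglyMeasurable_condExp.mono (h𝔄 n)).aestronglyMeasurable)
              ((stronglyMeasurable_condExp.mono (h𝔄 n)).aestronglyMeasurable)
              le_top
    have hsum : Tendsto (fun n => eLpNorm (μ[indR (A \ As n) | 𝔄 n]) ⊤ μ +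
        eLpNorm (μ[indR (B \ Bs n) | 𝔄 n]) ⊤ μ) atTop (𝓝 0) := by
      simpa using hAsN.add hBsN
    show Tendsto (fun n => eLpNorm (μ[indR ((A ∪ B) \ (As n ∪ Bs n)) | 𝔄 n]) ⊤ μ) atTop (𝓝 0)
    exact tendsto_of_tendsto_of_tendsto_of_le_of_le tendsto_const_nhds hsum
      (fun n => zero_le) key
end
end

section
/- Let {𝔄_n} be sub-σ-algebras and A ∈ 𝔄. If E(χ_A | 𝔄_n) → χ_A almost everywhere, then both A and A^c are uniformly covered by {𝔄_n}. Concretely, for 0 < r < 1 the sets A_n = {x : E(χ_A|𝔄_n)(x) ≥ r} ∈ 𝔄_n satisfy χ_{A_n} → χ_A a.e. and ‖E(χ_{A \ A_n}|𝔄_n)‖_∞ ≤ r. -/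
open MeasureTheory Filter Set Topology
open scoped ENNReal symmDiff

noncomputable section

set_option linter.unusedSectionVars false

section aux
variable {X : Type*} [mX : MeasurableSpace X] {μ : Measure X}

lemma indR_diff_eq (A B : Set X) : indR (A \ B) = Bᶜ.indicator (indR A) := by
  ext x
  by_cases hB : x ∈ B <;> by_cases hA : x ∈ A <;>
    simp [indR, Set.indicator, Set.mem_diff, hA, hB]

lemma indR_nonneg_s11 (A : Set X) : 0 ≤ᵐ[μ] indR A :=
  Filter.Eventually.of_forall fun x => Set.indicator_nonneg (fun _ _ => zero_le_one) x

lemma integrable_indR [IsProbabilityMeasure μ] {A : Set X} (hA : MeasurableSet A) :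
    Integrable (indR A) μ := (integrable_const (1 : ℝ)).indicator hA

lemma meas_level (𝔄 : ℕ → MeasurableSpace X) (A : Set X) (n : ℕ) (r : ℝ) :
    MeasurableSet[𝔄 n] {x | r ≤ (μ[indR A | 𝔄 n]) x} :=
  (stronglyMeasurable_condExp (m := 𝔄 n) (f := indR A) (μ := μ)).measurable measurableSet_Ici

lemma bound_level [IsProbabilityMeasure μ] (𝔄 : ℕ → MeasurableSpace X)
    {A : Set X} (hA : MeasurableSet A) (n : ℕ) {r : ℝ} (hr : 0 ≤ r) :
    eLpNorm (μ[indR (A \ {x | r ≤ (μ[indR A | 𝔄 n]) x}) | 𝔄 n]) ⊤ μ ≤ ENNReal.ofReal r := by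
  set f := μ[indR A | 𝔄 n] with hfdef
  set B : Set X := {x | r ≤ f x} with hBdef
  have hBm : MeasurableSet[𝔄 n] B := meas_level 𝔄 A n r
  have h1 : μ[indR (A \ B) | 𝔄 n] =ᵐ[μ] Bᶜ.indicator f := by
    rw [indR_diff_eq]
    exact condExp_indicator (integrable_indR hA) hBm.compl
  rw [eLpNorm_congr_ae h1, eLpNorm_exponent_top]
  refine eLpNormEssSup_le_of_ae_bound (C := r) ?_
  filter_upwards [condExp_nonneg (m := 𝔄 n) (μ := μ) (indR_nonneg_s11 A)] with x hx
  by_cases hxB : x ∈ B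
  · rw [Set.indicator_of_notMem (by simpa using hxB)]
    simpa using hr
  · rw [Set.indicator_of_mem (by simpa using hxB)]
    have h2 : f x < r := not_le.1 hxB
    rw [Real.norm_eq_abs, abs_of_nonneg hx]
    exact h2.le

lemma unifCovered_of_tendsto [IsProbabilityMeasure μ] (𝔄 : ℕ → MeasurableSpace X)
    (h𝔄 : ∀ n, 𝔄 n ≤ mX) (A : Set X) (hA : MeasurableSet A)
    (hconv : ∀ᵐ x ∂μ, Tendsto (fun n => (μ[indR A | 𝔄 n]) x) atTop (𝓝 (indR A x))) :
    UnifCovered μ 𝔄 A := by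
  classical
  set f : ℕ → X → ℝ := fun n => μ[indR A | 𝔄 n] with hfdef
  have hfmeas : ∀ n, StronglyMeasurable (f n) := fun n =>
    stronglyMeasurable_condExp.mono (h𝔄 n)
  have hgmeas : StronglyMeasurable (indR A) := stronglyMeasurable_const.indicator hA
  have hEg : ∀ k : ℕ, ∃ t : Set X, MeasurableSet t ∧ μ t ≤ ENNReal.ofReal ((1/2 : ℝ)^(k+1)) ∧
      TendstoUniformlyOn f (indR A) atTop tᶜ := fun k =>
    tendstoUniformlyOn_of_ae_tendsto' hfmeas hgmeas hconv (by positivity)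
  choose t htm htμ htu using hEg
  have hN : ∀ k : ℕ, ∃ N : ℕ, ∀ n, N ≤ n → ∀ x ∈ (t k)ᶜ,
      dist (indR A x) (f n x) < (1/2 : ℝ)^(k+1) := by
    intro k
    rcases eventually_atTop.1 ((Metric.tendstoUniformlyOn_iff.1 (htu k)) ((1/2 : ℝ)^(k+1))
      (by positivity)) with ⟨N, hNs⟩
    exact ⟨N, fun n hn x hx => hNs n hn x hx⟩
  choose N hNs using hN
  set K : ℕ → ℕ := fun n => Nat.findGreatest (fun k => ∀ j, j ≤ k → N j ≤ n) n with hKdef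
  set r : ℕ → ℝ := fun n => (1/2 : ℝ)^(K n + 1) with hrdef
  have hr_half : ∀ n, r n ≤ 1/2 := by
    intro n
    calc r n = (1/2:ℝ)^(K n + 1) := rfl
    _ ≤ (1/2:ℝ)^1 := by
        apply pow_le_pow_of_le_one (by norm_num) (by norm_num)
        omega
    _ = 1/2 := pow_one _
  have hr_pos : ∀ n, 0 < r n := fun n => by positivity
  -- K tends to infinity
  have hK_ge : ∀ k : ℕ, ∀ᶠ n in atTop, k ≤ K n := by
    intro k
    filter_upwards [eventually_ge_atTop (max k ((Finset.range (k+1)).sup N))] with n hn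
    refine Nat.le_findGreatest (le_trans (le_max_left _ _) hn) ?_
    intro j hj
    exact le_trans (Finset.le_sup (Finset.mem_range.2 (Nat.lt_succ_of_le hj)))
      (le_trans (le_max_right _ _) hn)
  have hK_top : Tendsto K atTop atTop := tendsto_atTop.2 hK_ge
  have hK_spec : ∀ᶠ n in atTop, ∀ j, j ≤ K n → N j ≤ n := by
    filter_upwards [eventually_ge_atTop (N 0)] with n hn
    exact Nat.findGreatest_spec (P := fun k => ∀ j, j ≤ k → N j ≤ n) (Nat.zero_le n)
      (fun j hj => by have hj0 : j = 0 := Nat.le_zero.mp hj; rw [hj0]; exact hn)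
  have hr_to : Tendsto r atTop (𝓝 0) := by
    have h1 : Tendsto (fun m : ℕ => (1/2 : ℝ)^m) atTop (𝓝 0) :=
      tendsto_pow_atTop_nhds_zero_of_lt_one (by norm_num) (by norm_num)
    exact h1.comp (tendsto_atTop_mono (fun n => Nat.le_succ (K n)) hK_top)
  -- Borel-Cantelli
  have htsum : (∑' k, μ (t k)) ≠ ∞ := by
    have h1 : (∑' k, μ (t k)) ≤ ∑' k : ℕ, (2⁻¹ : ℝ≥0∞)^(k+1) := by
      refine ENNReal.tsum_le_tsum fun k => (htμ k).trans_eq ?_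
      rw [ENNReal.ofReal_pow (by norm_num : (0:ℝ) ≤ 1/2)]
      congr 1
      rw [one_div, ENNReal.ofReal_inv_of_pos (by norm_num : (0:ℝ) < 2)]
      norm_num
    have h2 : (∑' k : ℕ, (2⁻¹ : ℝ≥0∞)^(k+1)) ≤ ∑' k : ℕ, (2⁻¹ : ℝ≥0∞)^k :=
      ENNReal.tsum_le_tsum fun k => pow_le_pow_of_le_one zero_le (by norm_num) (Nat.le_succ k)
    refine ne_of_lt (lt_of_le_of_lt (h1.trans h2) ?_)
    rw [ENNReal.tsum_geometric]
    norm_num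
  set As : ℕ → Set X := fun n => {x | r n ≤ f n x} with hAsdef
  refine ⟨As, fun n => meas_level 𝔄 A n (r n), ?_, ?_⟩
  · -- a.e. convergence of indicators
    filter_upwards [hconv, ae_eventually_notMem htsum] with x hx hxt
    by_cases hxA : x ∈ A
    · have h1 : indR A x = 1 := by simp [indR, hxA]
      rw [h1] at hx ⊢
      have h2 : ∀ᶠ n in atTop, (1/2 : ℝ) < f n x :=
        hx.eventually (eventually_gt_nhds (by norm_num))
      refine tendsto_const_nhds.congr' ?_
      filter_upwards [h2] with n hn
      have : x ∈ As n := le_of_lt (lt_of_le_of_lt (hr_half n) hn)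
      simp [indR, this]
    · have h1 : indR A x = 0 := by simp [indR, hxA]
      rw [h1] at hx ⊢
      rcases eventually_atTop.1 hxt with ⟨m, hm⟩
      refine tendsto_const_nhds.congr' ?_
      filter_upwards [hK_ge m, hK_spec] with n hn1 hn2
      have hxtK : x ∈ (t (K n))ᶜ := hm (K n) hn1
      have hNn : N (K n) ≤ n := hn2 (K n) le_rfl
      have hd := hNs (K n) n hNn x hxtK
      rw [h1] at hd
      have hfx : f n x < r n := by
        have hdeq : dist (0:ℝ) (f n x) = |f n x| := by rw [Real.dist_eq, zero_sub, abs_neg]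
        rw [hdeq] at hd
        exact lt_of_le_of_lt (le_abs_self _) hd
      have : x ∉ As n := by simpa [hAsdef] using not_le.2 hfx
      simp [indR, this]
  · -- eLpNorm tendsto 0
    have hub : Tendsto (fun n => ENNReal.ofReal (r n)) atTop (𝓝 0) := by
      rw [← ENNReal.ofReal_zero]
      exact ENNReal.tendsto_ofReal hr_to
    refine tendsto_of_tendsto_of_tendsto_of_le_of_le tendsto_const_nhds hub
      (fun n => zero_le) (fun n => ?_)
    exact bound_level 𝔄 hA n (hr_pos n).le
end aux

theorem stmt11 {X : Type*} [mX : MeasurableSpace X] (μ : Measure X) [IsProbabilityMeasure μ]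
    (𝔄 : ℕ → MeasurableSpace X) (h𝔄 : ∀ n, 𝔄 n ≤ mX)
    (A : Set X) (hA : MeasurableSet A)
    (hconv : ∀ᵐ x ∂μ, Tendsto (fun n => (μ[indR A | 𝔄 n]) x) atTop (𝓝 (indR A x))) :
    (UnifCovered μ 𝔄 A ∧ UnifCovered μ 𝔄 Aᶜ) ∧
    ∀ r : ℝ, 0 < r → r < 1 →
      (∀ n, MeasurableSet[𝔄 n] {x | r ≤ (μ[indR A | 𝔄 n]) x}) ∧
      (∀ᵐ x ∂μ, Tendsto (fun n => indR {x | r ≤ (μ[indR A | 𝔄 n]) x} x) atTop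
        (𝓝 (indR A x))) ∧
      ∀ n, eLpNorm (μ[indR (A \ {x | r ≤ (μ[indR A | 𝔄 n]) x}) | 𝔄 n]) ⊤ μ ≤
        ENNReal.ofReal r := by
  have hconv' : ∀ᵐ x ∂μ, Tendsto (fun n => (μ[indR Aᶜ | 𝔄 n]) x) atTop (𝓝 (indR Aᶜ x)) := by
    have h1 : ∀ n, μ[indR Aᶜ | 𝔄 n] =ᵐ[μ] fun x => 1 - (μ[indR A | 𝔄 n]) x := by
      intro n
      have heq : indR Aᶜ = (fun _ : X => (1:ℝ)) - indR A := by
        ext x; by_cases hx : x ∈ A <;> simp [indR, hx]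
      rw [heq]
      filter_upwards [condExp_sub (m := 𝔄 n) (integrable_const (1:ℝ)) (integrable_indR hA)]
        with x hx
      rw [hx]
      simp [condExp_const (h𝔄 n) (1:ℝ)]
    filter_upwards [hconv, ae_all_iff.2 h1] with x hx hx1
    have h2 : Tendsto (fun n => 1 - (μ[indR A | 𝔄 n]) x) atTop (𝓝 (1 - indR A x)) :=
      tendsto_const_nhds.sub hx
    have h3 : indR Aᶜ x = 1 - indR A x := by
      by_cases hxA : x ∈ A <;> simp [indR, hxA]
    rw [h3]
    exact h2.congr fun n => (hx1 n).symm
  constructor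
  · exact ⟨unifCovered_of_tendsto 𝔄 h𝔄 A hA hconv,
      unifCovered_of_tendsto 𝔄 h𝔄 Aᶜ hA.compl hconv'⟩
  · intro r hr0 hr1
    refine ⟨fun n => meas_level 𝔄 A n r, ?_, fun n => bound_level 𝔄 hA n hr0.le⟩
    filter_upwards [hconv] with x hx
    by_cases hxA : x ∈ A
    · have h1 : indR A x = 1 := by simp [indR, hxA]
      rw [h1] at hx ⊢
      have h2 : ∀ᶠ n in atTop, r < (μ[indR A | 𝔄 n]) x :=
        hx.eventually (eventually_gt_nhds hr1)
      refine tendsto_const_nhds.congr' ?_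
      filter_upwards [h2] with n hn
      have : x ∈ {x | r ≤ (μ[indR A | 𝔄 n]) x} := le_of_lt hn
      exact (Set.indicator_of_mem this (fun _ => (1:ℝ))).symm
    · have h1 : indR A x = 0 := by simp [indR, hxA]
      rw [h1] at hx ⊢
      have h2 : ∀ᶠ n in atTop, (μ[indR A | 𝔄 n]) x < r :=
        hx.eventually (eventually_lt_nhds hr0)
      refine tendsto_const_nhds.congr' ?_
      filter_upwards [h2] with n hn
      have : x ∉ {x | r ≤ (μ[indR A | 𝔄 n]) x} := not_le.2 hn
      exact (Set.indicator_of_notMem this (fun _ => (1:ℝ))).symm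
end
end

section
/- Let {𝔄_n} be sub-σ-algebras, and for N ∈ ℕ let C_N be the set of functions h = Σ_{k≥N} E(χ_{B_k}|𝔄_k) where the B_k ∈ 𝔄 are pairwise disjoint and only finitely many are nonempty. Then every h ∈ C_N satisfies ‖h‖_{L^1} ≤ 1. Define W^{⊥a.e.} = {f ∈ L^∞ : ⟨f, h_{N_k}⟩ → 0 for every sequence h_{N_k} ∈ C_{N_k} with N_k → ∞}. Then for f ∈ L^∞: E(f|𝔄_n) → 0 almost everywhere if and only if f ∈ W^{⊥a.e.}. -/
open MeasureTheory Filter Set Topology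
open scoped ENNReal symmDiff

noncomputable section

def MemC {X : Type*} [mX : MeasurableSpace X] (μ : Measure X)
    (𝔄 : ℕ → MeasurableSpace X) (N : ℕ) (h : X → ℝ) : Prop :=
  ∃ (s : Finset ℕ) (B : ℕ → Set X),
    (∀ k ∈ s, N ≤ k) ∧ (∀ k, MeasurableSet (B k)) ∧
    (∀ i ∈ s, ∀ j ∈ s, i ≠ j → Disjoint (B i) (B j)) ∧
    h = fun x => ∑ k ∈ s, (μ[indR (B k) | 𝔄 k]) x

def MemWperp {X : Type*} [mX : MeasurableSpace X] (μ : Measure X)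
    (𝔄 : ℕ → MeasurableSpace X) (f : X → ℝ) : Prop :=
  ∀ (Nk : ℕ → ℕ) (h : ℕ → X → ℝ), Tendsto Nk atTop atTop →
    (∀ k, MemC μ 𝔄 (Nk k) (h k)) →
    Tendsto (fun k => ∫ x, f x * h k x ∂μ) atTop (𝓝 0)

section Aux
variable {X : Type*} [mX : MeasurableSpace X] {μ : Measure X} [IsProbabilityMeasure μ]

lemma indR_integrable_s17 {B : Set X} (hB : MeasurableSet B) : Integrable (indR B) μ :=
  (integrable_const (1 : ℝ)).indicator hB

lemma indR_abs_le_one (B : Set X) (x : X) : |indR B x| ≤ (1 : ℝ) := by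
  unfold indR; by_cases h : x ∈ B <;> simp [h]

lemma integrable_of_bdd {f : X → ℝ} (hfm : Measurable f) {C : ℝ} (hC : ∀ x, |f x| ≤ C) :
    Integrable f μ :=
  ⟨hfm.aestronglyMeasurable,
   HasFiniteIntegral.of_bounded (C := C) (ae_of_all _ fun x => by simpa [Real.norm_eq_abs] using hC x)⟩

lemma nonempty_of_prob (μ : Measure X) [IsProbabilityMeasure μ] : Nonempty X := by
  by_contra h
  have : μ Set.univ = 0 := by
    rw [Set.univ_eq_empty_iff.2 (not_nonempty_iff.mp h)]; simp
  simp [measure_univ] at this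

lemma my_integral_indicator {B : Set X} (hB : MeasurableSet B) (F : X → ℝ) :
    ∫ x, B.indicator F x ∂μ = ∫ x in B, F x ∂μ := integral_indicator hB

lemma integral_indR {B : Set X} (hB : MeasurableSet B) :
    ∫ x, indR B x ∂μ = (μ B).toReal := by
  unfold indR
  rw [integral_indicator_const (1 : ℝ) hB]
  simp [Measure.real]

/-- Key adjoint identity: ∫ f · E[χ_B | m] = ∫_B E[f | m]. -/
lemma key_adjoint {m : MeasurableSpace X} (hm : m ≤ mX) {f : X → ℝ}
    (hfm : Measurable[mX] f)
    {C : ℝ} (hC : ∀ x, |f x| ≤ C) {B : Set X} (hB : MeasurableSet[mX] B) :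
    ∫ x, f x * (μ[indR B | m]) x ∂μ = ∫ x in B, (μ[f | m]) x ∂μ := by
  have hne : Nonempty X := nonempty_of_prob (mX := mX) μ
  have hC0 : 0 ≤ C := le_trans (abs_nonneg _) (hC (Classical.arbitrary X))
  have hf_int : Integrable f μ := integrable_of_bdd (mX := mX) (μ := μ) hfm hC
  have hind_int : Integrable (indR B) μ := indR_integrable_s17 (mX := mX) (μ := μ) hB
  set g := μ[indR B | m] with hg
  have hg_sm : StronglyMeasurable[m] g := stronglyMeasurable_condExp
  have hg_bdd : ∀ᵐ x ∂μ, ‖g x‖ ≤ (1 : ℝ) := by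
    have := ae_bdd_condExp_of_ae_bdd (m := m) (μ := μ) (R := 1) (f := indR B)
      (ae_of_all _ fun x => by simpa using indR_abs_le_one B x)
    filter_upwards [this] with x hx
    simpa [Real.norm_eq_abs] using hx
  have step1 : μ[(fun x => g x * f x) | m] =ᵐ[μ] fun x => g x * (μ[f|m]) x := by
    have := condExp_stronglyMeasurable_mul_of_bound hm hg_sm hf_int 1 hg_bdd
    exact this
  set F := μ[f | m] with hF
  have hF_sm : StronglyMeasurable[m] F := stronglyMeasurable_condExp
  have hF_bdd : ∀ᵐ x ∂μ, ‖F x‖ ≤ C := by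
    have := ae_bdd_condExp_of_ae_bdd (m := m) (μ := μ) (R := C.toNNReal) (f := f)
      (ae_of_all _ fun x => by simpa [Real.coe_toNNReal C hC0] using hC x)
    filter_upwards [this] with x hx
    simpa [Real.norm_eq_abs, Real.coe_toNNReal C hC0] using hx
  have step2 : μ[(fun x => F x * indR B x) | m] =ᵐ[μ] fun x => F x * g x := by
    have := condExp_stronglyMeasurable_mul_of_bound hm hF_sm hind_int C hF_bdd
    exact this
  calc ∫ x, f x * g x ∂μ = ∫ x, g x * f x ∂μ := by simp_rw [mul_comm]
    _ = ∫ x, (μ[(fun x => g x * f x) | m]) x ∂μ := (integral_condExp hm).symm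
    _ = ∫ x, g x * F x ∂μ := integral_congr_ae step1
    _ = ∫ x, F x * g x ∂μ := by simp_rw [mul_comm]
    _ = ∫ x, (μ[(fun x => F x * indR B x) | m]) x ∂μ := (integral_congr_ae step2).symm
    _ = ∫ x, F x * indR B x ∂μ := integral_condExp hm
    _ = ∫ x, B.indicator F x ∂μ := by
        refine integral_congr_ae (ae_of_all _ fun x => ?_)
        unfold indR
        by_cases h : x ∈ B <;> simp [h]
    _ = ∫ x in B, F x ∂μ := my_integral_indicator (mX := mX) (μ := μ) hB F

lemma integral_condexp_indR {m : MeasurableSpace X} (hm : m ≤ mX) {B : Set X}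
    (hB : MeasurableSet[mX] B) : ∫ x, (μ[indR B | m]) x ∂μ = (μ B).toReal := by
  rw [integral_condExp hm]
  exact integral_indR (mX := mX) (μ := μ) hB


lemma partC {𝔄 : ℕ → MeasurableSpace X} (h𝔄 : ∀ n, 𝔄 n ≤ mX) {N : ℕ} {h : X → ℝ}
    (hmem : MemC μ 𝔄 N h) : eLpNorm h 1 μ ≤ 1 := by
  obtain ⟨s, B, hsN, hBm, hdisj, rfl⟩ := hmem
  have h_int : Integrable (fun x => ∑ k ∈ s, (μ[indR (B k) | 𝔄 k]) x) μ :=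
    integrable_finset_sum s fun k _ => integrable_condExp
  have hnn : ∀ᵐ x ∂μ, 0 ≤ ∑ k ∈ s, (μ[indR (B k) | 𝔄 k]) x := by
    have hh : ∀ᵐ x ∂μ, ∀ k : ℕ, 0 ≤ (μ[indR (B k) | 𝔄 k]) x := by
      rw [ae_all_iff]
      intro k
      exact condExp_nonneg (ae_of_all _ fun x => Set.indicator_nonneg (fun _ _ => zero_le_one) x)
    filter_upwards [hh] with x hx
    exact Finset.sum_nonneg fun k _ => hx k
  rw [eLpNorm_one_eq_lintegral_enorm, ← ofReal_integral_norm_eq_lintegral_enorm h_int]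
  have heq : ∫ x, ‖∑ k ∈ s, (μ[indR (B k) | 𝔄 k]) x‖ ∂μ
      = ∑ k ∈ s, (μ (B k)).toReal := by
    rw [integral_congr_ae (g := fun x => ∑ k ∈ s, (μ[indR (B k) | 𝔄 k]) x) ?_]
    · rw [integral_finset_sum s fun k _ => integrable_condExp]
      exact Finset.sum_congr rfl fun k _ => integral_condexp_indR (h𝔄 k) (hBm k)
    · filter_upwards [hnn] with x hx
      rw [Real.norm_eq_abs, abs_of_nonneg hx]
  rw [heq]
  have hle : ∑ k ∈ s, (μ (B k)).toReal ≤ 1 := by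
    have h1 : ∑ k ∈ s, (μ (B k)) = μ (⋃ k ∈ s, B k) :=
      (measure_biUnion_finset (fun i hi j hj hij => hdisj i hi j hj hij) fun k _ => hBm k).symm
    calc ∑ k ∈ s, (μ (B k)).toReal = (∑ k ∈ s, μ (B k)).toReal :=
          (ENNReal.toReal_sum (fun k _ => measure_ne_top μ _)).symm
      _ ≤ (1 : ℝ≥0∞).toReal := by
          rw [h1]; exact ENNReal.toReal_mono ENNReal.one_ne_top prob_le_one
      _ = 1 := by simp
  calc ENNReal.ofReal _ ≤ ENNReal.ofReal 1 := ENNReal.ofReal_le_ofReal hle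
    _ = 1 := ENNReal.ofReal_one

omit mX in
lemma sum_indicator_abs_le {s : Finset ℕ} {B : ℕ → Set X}
    (hdisj : ∀ i ∈ s, ∀ j ∈ s, i ≠ j → Disjoint (B i) (B j))
    (v : ℕ → X → ℝ) (x : X) {C : ℝ} (hC0 : 0 ≤ C)
    (hv : ∀ j ∈ s, x ∈ B j → |v j x| ≤ C) :
    |∑ j ∈ s, (B j).indicator (v j) x| ≤ C := by
  by_cases hx : ∃ j ∈ s, x ∈ B j
  · obtain ⟨j₀, hj₀, hxj₀⟩ := hx
    rw [Finset.sum_eq_single_of_mem j₀ hj₀ ?_]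
    · rw [Set.indicator_of_mem hxj₀]; exact hv j₀ hj₀ hxj₀
    · intro j hj hne
      refine Set.indicator_of_notMem ?_ _
      exact fun hxj => Set.disjoint_left.mp (hdisj j hj j₀ hj₀ hne) hxj hxj₀
  · push_neg at hx
    rw [Finset.sum_eq_zero fun j hj => Set.indicator_of_notMem (hx j hj) _]
    simpa using hC0

lemma forward_dir {𝔄 : ℕ → MeasurableSpace X} (h𝔄 : ∀ n, 𝔄 n ≤ mX) {f : X → ℝ}
    (hfm : Measurable[mX] f) {C : ℝ} (hC : ∀ x, |f x| ≤ C)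
    (hae : ∀ᵐ x ∂μ, Tendsto (fun n => (μ[f | 𝔄 n]) x) atTop (𝓝 0)) :
    MemWperp μ 𝔄 f := by
  have hne : Nonempty X := nonempty_of_prob (mX := mX) μ
  have hC0 : 0 ≤ C := le_trans (abs_nonneg _) (hC (Classical.arbitrary X))
  intro Nk h hNk hmem
  choose s B hsN hBm hdisj heq using hmem
  set φ : ℕ → X → ℝ :=
    fun k x => ∑ j ∈ s k, (B k j).indicator (fun y => (μ[f | 𝔄 j]) y) x with hφ
  have int_eq : ∀ k, ∫ x, f x * h k x ∂μ = ∫ x, φ k x ∂μ := by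
    intro k
    rw [heq k]
    have h1 : ∀ x, f x * (∑ j ∈ s k, (μ[indR (B k j) | 𝔄 j]) x)
        = ∑ j ∈ s k, f x * (μ[indR (B k j) | 𝔄 j]) x := fun x => Finset.mul_sum _ _ _
    simp_rw [h1]
    rw [integral_finset_sum _ fun j _ => integrable_condExp.bdd_mul hfm.aestronglyMeasurable
      (ae_of_all _ fun x => by simpa [Real.norm_eq_abs] using hC x)]
    rw [hφ]
    rw [integral_finset_sum _ fun j _ => (integrable_condExp.indicator (hBm k j))]
    refine Finset.sum_congr rfl fun j _ => ?_
    rw [key_adjoint (h𝔄 j) hfm hC (hBm k j)]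
    exact (my_integral_indicator (mX := mX) (μ := μ) (hBm k j) _).symm
  have hbd : ∀ᵐ x ∂μ, ∀ j : ℕ, |(μ[f | 𝔄 j]) x| ≤ C := by
    rw [ae_all_iff]; intro j
    have hb := ae_bdd_condExp_of_ae_bdd (m := 𝔄 j) (μ := μ) (R := C.toNNReal)
      (ae_of_all _ fun x => by simpa [Real.coe_toNNReal C hC0] using hC x)
    filter_upwards [hb] with x hx
    simpa [Real.coe_toNNReal C hC0] using hx
  have hmeas : ∀ k, AEStronglyMeasurable (φ k) μ := by
    intro k
    refine (Finset.measurable_sum (s k) fun j _ => ?_).aestronglyMeasurable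
    exact ((stronglyMeasurable_condExp.mono (h𝔄 j)).measurable).indicator (hBm k j)
  have hboundk : ∀ k, ∀ᵐ x ∂μ, ‖φ k x‖ ≤ C := by
    intro k
    filter_upwards [hbd] with x hx
    rw [Real.norm_eq_abs]
    exact sum_indicator_abs_le (hdisj k) _ x hC0 fun j _ _ => hx j
  have hlim : ∀ᵐ x ∂μ, Tendsto (fun k => φ k x) atTop (𝓝 0) := by
    filter_upwards [hae] with x hx
    rw [NormedAddCommGroup.tendsto_nhds_zero]
    intro ε hε
    obtain ⟨M, hM⟩ := (Metric.tendsto_atTop.mp hx) (ε/2) (half_pos hε)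
    filter_upwards [hNk.eventually_ge_atTop M] with k hk
    rw [Real.norm_eq_abs]
    refine lt_of_le_of_lt
      (sum_indicator_abs_le (hdisj k) _ x (half_pos hε).le fun j hj _ => ?_)
      (half_lt_self hε)
    have h2 := hM j (le_trans hk (hsN k j hj))
    rw [Real.dist_eq, sub_zero] at h2
    exact h2.le
  have hdct := tendsto_integral_of_dominated_convergence (μ := μ)
    (F := φ) (f := fun _ => (0:ℝ)) (fun _ => C) hmeas (integrable_const C) hboundk hlim
  rw [show (fun k => ∫ x, f x * h k x ∂μ) = fun k => ∫ x, φ k x ∂μ from funext int_eq]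
  simpa using hdct

lemma build_block {𝔄 : ℕ → MeasurableSpace X} (h𝔄 : ∀ n, 𝔄 n ≤ mX) {f : X → ℝ}
    (hfm : Measurable[mX] f) {C : ℝ} (hC : ∀ x, |f x| ≤ C)
    (N : ℕ) {R : ℕ → Set X} (hRm : ∀ n, MeasurableSet[mX] (R n))
    (hRdisj : Pairwise (Function.onFun Disjoint R)) {σ : ℝ} (hσ : σ = 1 ∨ σ = -1)
    {ε : ℝ} (hε : 0 ≤ ε) (hRg : ∀ n, ∀ x ∈ R n, ε ≤ σ * (μ[f | 𝔄 (N + n)]) x)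
    {δ : ℝ≥0∞} (hδ0 : δ ≠ 0) (hδtop : δ ≠ ∞)
    (hRsum : δ ≤ ∑' n, μ (R n)) :
    ∃ h, MemC μ 𝔄 N h ∧ ε * (δ/2).toReal ≤ |∫ x, f x * h x ∂μ| := by
  -- find a finite partial sum exceeding δ/2
  obtain ⟨t, ht⟩ : ∃ t : Finset ℕ, δ/2 < ∑ n ∈ t, μ (R n) := by
    have h1 : δ/2 < ∑' n, μ (R n) :=
      lt_of_lt_of_le (ENNReal.half_lt_self hδ0 hδtop) hRsum
    rw [ENNReal.tsum_eq_iSup_sum, lt_iSup_iff] at h1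
    exact h1
  classical
  set Bk : ℕ → Set X := fun k => if N ≤ k then R (k - N) else ∅ with hBk
  have hBkm : ∀ k, MeasurableSet[mX] (Bk k) := by
    intro k; rw [hBk]; dsimp only
    split
    · exact hRm _
    · exact MeasurableSet.empty
  have hBkeq : ∀ n : ℕ, Bk (N + n) = R n := by
    intro n; rw [hBk]; simp
  set s : Finset ℕ := t.image (fun n => N + n) with hs
  have hinj : ∀ a ∈ t, ∀ b ∈ t, N + a = N + b → a = b := fun a _ b _ hab => by omega
  refine ⟨fun x => ∑ k ∈ s, (μ[indR (Bk k) | 𝔄 k]) x, ⟨s, Bk, ?_, hBkm, ?_, rfl⟩, ?_⟩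
  · intro k hk
    rw [hs] at hk
    obtain ⟨n, -, rfl⟩ := Finset.mem_image.mp hk
    omega
  · intro i hi j hj hij
    rw [hs] at hi hj
    obtain ⟨a, -, rfl⟩ := Finset.mem_image.mp hi
    obtain ⟨b, -, rfl⟩ := Finset.mem_image.mp hj
    rw [hBkeq a, hBkeq b]
    exact hRdisj (by omega)
  · -- the integral bound
    have hIeq : ∫ x, f x * (∑ k ∈ s, (μ[indR (Bk k) | 𝔄 k]) x) ∂μ
        = ∑ n ∈ t, ∫ x in R n, (μ[f | 𝔄 (N + n)]) x ∂μ := by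
      have h1 : ∀ x, f x * (∑ k ∈ s, (μ[indR (Bk k) | 𝔄 k]) x)
          = ∑ k ∈ s, f x * (μ[indR (Bk k) | 𝔄 k]) x := fun x => Finset.mul_sum _ _ _
      simp_rw [h1]
      rw [integral_finset_sum _ fun k _ => integrable_condExp.bdd_mul hfm.aestronglyMeasurable
        (ae_of_all _ fun x => by simpa [Real.norm_eq_abs] using hC x)]
      rw [hs, Finset.sum_image hinj]
      refine Finset.sum_congr rfl fun n _ => ?_
      rw [key_adjoint (h𝔄 (N + n)) hfm hC (hBkm (N + n)), hBkeq n]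
    rw [hIeq]
    have hterm : ∀ n ∈ t, ε * (μ (R n)).toReal
        ≤ σ * ∫ x in R n, (μ[f | 𝔄 (N + n)]) x ∂μ := by
      intro n _
      rw [← integral_const_mul]
      refine le_trans (le_of_eq ?_) (setIntegral_ge_of_const_le (hRm n) (measure_ne_top μ _)
        (fun x hx => hRg n x hx) (integrable_condExp.const_mul σ).integrableOn)
      simp [smul_eq_mul, mul_comm, Measure.real]
    have hlow : ε * (δ/2).toReal ≤ σ * ∑ n ∈ t, ∫ x in R n, (μ[f | 𝔄 (N + n)]) x ∂μ := by
      rw [Finset.mul_sum]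
      calc ε * (δ/2).toReal ≤ ε * (∑ n ∈ t, μ (R n)).toReal := by
            refine mul_le_mul_of_nonneg_left ?_ hε
            exact ENNReal.toReal_mono
              (ENNReal.sum_lt_top.mpr fun n _ => measure_lt_top μ _).ne ht.le
        _ = ∑ n ∈ t, ε * (μ (R n)).toReal := by
            rw [ENNReal.toReal_sum (fun n _ => measure_ne_top μ _), Finset.mul_sum]
        _ ≤ _ := Finset.sum_le_sum hterm
    refine le_trans hlow ?_
    rcases hσ with rfl | rfl
    · rw [one_mul]; exact le_abs_self _
    · rw [neg_one_mul]; exact neg_le_abs _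

lemma backward_dir {𝔄 : ℕ → MeasurableSpace X} (h𝔄 : ∀ n, 𝔄 n ≤ mX) {f : X → ℝ}
    (hfm : Measurable[mX] f) {C : ℝ} (hC : ∀ x, |f x| ≤ C) (hW : MemWperp μ 𝔄 f) :
    ∀ᵐ x ∂μ, Tendsto (fun n => (μ[f | 𝔄 n]) x) atTop (𝓝 0) := by
  by_contra hcon
  have hgm : ∀ n : ℕ, Measurable[mX] (μ[f | 𝔄 n]) :=
    fun n => (stronglyMeasurable_condExp.mono (h𝔄 n)).measurable
  set T : ℕ → Set X := fun m => {x | ∀ N, ∃ n, N ≤ n ∧ 1/((m:ℝ)+1) < |(μ[f | 𝔄 n]) x|} with hT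
  have hsub : {x | ¬ Tendsto (fun n => (μ[f | 𝔄 n]) x) atTop (𝓝 0)} ⊆ ⋃ m, T m := by
    intro x hx
    simp only [Set.mem_setOf_eq] at hx
    rw [Set.mem_iUnion]
    by_contra hnot
    push_neg at hnot
    apply hx
    rw [Metric.tendsto_atTop]
    intro r hr
    obtain ⟨m, hm⟩ := exists_nat_one_div_lt hr
    have hxm := hnot m
    rw [hT] at hxm
    simp only [Set.mem_setOf_eq] at hxm
    push_neg at hxm
    obtain ⟨N, hN⟩ := hxm
    refine ⟨N, fun n hn => ?_⟩
    rw [Real.dist_eq, sub_zero]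
    exact lt_of_le_of_lt (hN n hn) hm
  obtain ⟨m, hμm⟩ : ∃ m, μ (T m) ≠ 0 := by
    by_contra hall
    push_neg at hall
    exact hcon (ae_iff.mpr (measure_mono_null hsub (measure_iUnion_null hall)))
  set ε : ℝ := 1/((m:ℝ)+1) with hεdef
  have hε : 0 < ε := by positivity
  set δ : ℝ≥0∞ := μ (T m) with hδdef
  have hδtop : δ ≠ ∞ := measure_ne_top μ _
  have hδ20 : δ/2 ≠ 0 := fun hh =>
    hμm ((ENNReal.div_eq_zero_iff.mp hh).resolve_right (by norm_num))
  have hδ2top : δ/2 ≠ ∞ := (ENNReal.div_lt_top hδtop (by norm_num)).ne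
  set c : ℝ := ε * ((δ/2)/2).toReal with hc
  have hcpos : 0 < c := by
    refine mul_pos hε (ENNReal.toReal_pos ?_ ?_)
    · exact fun hh => hδ20 ((ENNReal.div_eq_zero_iff.mp hh).resolve_right (by norm_num))
    · exact (ENNReal.div_lt_top hδ2top (by norm_num)).ne
  have claim : ∀ N, ∃ h, MemC μ 𝔄 N h ∧ c ≤ |∫ x, f x * h x ∂μ| := by
    intro N
    set F : ℕ → Set X := fun n => {x | ε < |(μ[f | 𝔄 (N + n)]) x|} with hF
    have hFm : ∀ n, MeasurableSet (F n) :=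
      fun n => measurableSet_lt measurable_const (hgm (N + n)).abs
    set D : ℕ → Set X := disjointed F with hD
    have hDm : ∀ n, MeasurableSet (D n) := MeasurableSet.disjointed hFm
    have hDdisj : Pairwise (Function.onFun Disjoint D) := disjoint_disjointed F
    have hTsub : T m ⊆ ⋃ n, D n := by
      rw [hD, iUnion_disjointed]
      intro x hx
      obtain ⟨n, hn, hng⟩ := hx N
      refine Set.mem_iUnion.2 ⟨n - N, ?_⟩
      rw [hF]
      simp only [Set.mem_setOf_eq]
      rwa [Nat.add_sub_cancel' hn]
    have hsum : δ ≤ ∑' n, μ (D n) := by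
      rw [← measure_iUnion hDdisj hDm]
      exact measure_mono hTsub
    set P : ℕ → Set X := fun n => D n ∩ {x | ε < (μ[f | 𝔄 (N + n)]) x} with hP
    set Q : ℕ → Set X := fun n => D n ∩ {x | (μ[f | 𝔄 (N + n)]) x < -ε} with hQ
    have hPm : ∀ n, MeasurableSet (P n) :=
      fun n => (hDm n).inter (measurableSet_lt measurable_const (hgm (N + n)))
    have hQm : ∀ n, MeasurableSet (Q n) :=
      fun n => (hDm n).inter (measurableSet_lt (hgm (N + n)) measurable_const)
    have hPdisj : Pairwise (Function.onFun Disjoint P) :=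
      hDdisj.mono fun i j hij => hij.mono Set.inter_subset_left Set.inter_subset_left
    have hQdisj : Pairwise (Function.onFun Disjoint Q) :=
      hDdisj.mono fun i j hij => hij.mono Set.inter_subset_left Set.inter_subset_left
    have hDPQ : ∀ n, D n ⊆ P n ∪ Q n := by
      intro n x hx
      have hxF : x ∈ F n := disjointed_subset F n hx
      rw [hF] at hxF
      simp only [Set.mem_setOf_eq] at hxF
      rcases lt_abs.mp hxF with hcase | hcase
      · exact Or.inl ⟨hx, hcase⟩
      · refine Or.inr ⟨hx, ?_⟩
        show (μ[f | 𝔄 (N + n)]) x < -ε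
        linarith
    have hsplit : δ ≤ (∑' n, μ (P n)) + ∑' n, μ (Q n) := by
      calc δ ≤ ∑' n, μ (D n) := hsum
        _ ≤ ∑' n, (μ (P n) + μ (Q n)) :=
            ENNReal.tsum_le_tsum fun n =>
              le_trans (measure_mono (hDPQ n)) (measure_union_le _ _)
        _ = _ := ENNReal.tsum_add
    have hcases : δ/2 ≤ (∑' n, μ (P n)) ∨ δ/2 ≤ ∑' n, μ (Q n) := by
      by_contra hcn
      push_neg at hcn
      have hlt := ENNReal.add_lt_add hcn.1 hcn.2
      rw [ENNReal.add_halves] at hlt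
      exact absurd hsplit (not_le.mpr hlt)
    rcases hcases with hca | hca
    · obtain ⟨h, hmem, hb⟩ := build_block (μ := μ) h𝔄 hfm hC N hPm hPdisj (Or.inl rfl)
        hε.le (fun n x hx => by
          rw [one_mul]
          have h2 : ε < (μ[f | 𝔄 (N + n)]) x := hx.2
          exact h2.le) hδ20 hδ2top hca
      exact ⟨h, hmem, hb⟩
    · obtain ⟨h, hmem, hb⟩ := build_block (μ := μ) h𝔄 hfm hC N hQm hQdisj (Or.inr rfl)
        hε.le (fun n x hx => by
          rw [neg_one_mul]
          have h2 : (μ[f | 𝔄 (N + n)]) x < -ε := hx.2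
          linarith) hδ20 hδ2top hca
      exact ⟨h, hmem, hb⟩
  choose hfun hmemC hbound using claim
  have htd := hW id hfun tendsto_id hmemC
  rw [NormedAddCommGroup.tendsto_nhds_zero] at htd
  obtain ⟨k, hk⟩ := (htd c hcpos).exists
  rw [Real.norm_eq_abs] at hk
  exact absurd (hbound k) (not_le.mpr hk)

end Aux

theorem stmt17 {X : Type*} [mX : MeasurableSpace X] (μ : Measure X) [IsProbabilityMeasure μ]
    (𝔄 : ℕ → MeasurableSpace X) (h𝔄 : ∀ n, 𝔄 n ≤ mX) :
    (∀ (N : ℕ) (h : X → ℝ), MemC μ 𝔄 N h → eLpNorm h 1 μ ≤ 1) ∧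
    (∀ f : X → ℝ, Measurable f → (∃ C : ℝ, ∀ x, |f x| ≤ C) →
      ((∀ᵐ x ∂μ, Tendsto (fun n => (μ[f | 𝔄 n]) x) atTop (𝓝 0)) ↔ MemWperp μ 𝔄 f)) := by
  constructor
  · intro N h hmem
    exact partC h𝔄 hmem
  · rintro f hfm ⟨C, hC⟩
    constructor
    · intro hae
      exact forward_dir h𝔄 hfm hC hae
    · intro hW
      exact backward_dir h𝔄 hfm hC hW
end
end
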